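/- Let G be a group and let H₁, H₂ be subgroups of G each of index at least 3 (possibly infinite). Then for any elements g₁, g₂ ∈ G the union of cosets g₁H₁ ∪ g₂H₂ is a proper subset of G; i.e., there exists γ ∈ G with γ ∉ g₁H₁ and γ ∉ g₂H₂. -/
import Mathlib


open scoped Pointwise

private lemma aux_exists_not_mem {α : Type*} (hc : Nat.card α = 0 ∨ 3 ≤ Nat.card α)
    (a : α) (s : Finset α) (hs : s.card ≤ 2) : ∃ x : α, x ∉ s := by
  rcases hc with hc | hc
  · rcases Nat.card_eq_zero.mp hc with h | h
    · exact (h.false a).elim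
    · exact Infinite.exists_notMem_finset s
  · haveI : Finite α := Nat.finite_of_card_ne_zero (by omega)
    haveI : Fintype α := Fintype.ofFinite α
    by_contra hall
    push_neg at hall
    have : (Finset.univ : Finset α) ⊆ s := fun x _ => hall x
    have := Finset.card_le_card this
    simp [Finset.card_univ] at this
    rw [Nat.card_eq_fintype_card] at hc
    omega

private lemma aux_three {G : Type*} [Group G] (H : Subgroup G)
    (h : H.index = 0 ∨ 3 ≤ H.index) (g : G) :
    ∃ u v : G, g⁻¹ * u ∉ H ∧ g⁻¹ * v ∉ H ∧ u⁻¹ * v ∉ H := by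
  have hc : Nat.card (G ⧸ H) = 0 ∨ 3 ≤ Nat.card (G ⧸ H) := by
    rwa [← Subgroup.index]
  haveI := Classical.decEq (G ⧸ H)
  obtain ⟨a, ha⟩ := aux_exists_not_mem hc ((g : G ⧸ H)) {(g : G ⧸ H)} (by simp)
  obtain ⟨b, hb⟩ := aux_exists_not_mem hc ((g : G ⧸ H)) {(g : G ⧸ H), a}
    (by apply le_trans (Finset.card_insert_le _ _); simp)
  simp only [Finset.mem_insert, Finset.mem_singleton, not_or] at ha hb
  obtain ⟨u, rfl⟩ := QuotientGroup.mk_surjective a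
  obtain ⟨v, rfl⟩ := QuotientGroup.mk_surjective b
  refine ⟨u, v, ?_, ?_, ?_⟩
  · intro h'; exact ha ((QuotientGroup.eq).mpr h').symm
  · intro h'; exact hb.1 ((QuotientGroup.eq).mpr h').symm
  · intro h'; exact hb.2 ((QuotientGroup.eq).mpr h').symm

/-- **Coset covering lemma.** If `H₁, H₂` are subgroups of a group `G`, each of index
at least 3 (index `0` meaning infinite index), then for any `g₁ g₂ : G` the union of the
left cosets `g₁H₁ ∪ g₂H₂` is a proper subset of `G`. -/
theorem exists_not_mem_leftCoset_union {G : Type*} [Group G] (H₁ H₂ : Subgroup G)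
    (h₁ : H₁.index = 0 ∨ 3 ≤ H₁.index) (h₂ : H₂.index = 0 ∨ 3 ≤ H₂.index)
    (g₁ g₂ : G) :
    ∃ γ : G, γ ∉ g₁ • (H₁ : Set G) ∧ γ ∉ g₂ • (H₂ : Set G) := by
  by_contra hcon
  push_neg at hcon
  -- hcon : ∀ γ, γ ∉ g₁ • H₁ → γ ∈ g₂ • H₂
  have memA : ∀ γ : G, γ ∈ g₁ • (H₁ : Set G) ↔ g₁⁻¹ * γ ∈ H₁ := fun γ =>
    Set.mem_smul_set_iff_inv_smul_mem (a := g₁) (A := (H₁ : Set G)) (x := γ)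
  have memB : ∀ γ : G, γ ∈ g₂ • (H₂ : Set G) ↔ g₂⁻¹ * γ ∈ H₂ := fun γ =>
    Set.mem_smul_set_iff_inv_smul_mem (a := g₂) (A := (H₂ : Set G)) (x := γ)
  -- Step 1: H₁ ≤ H₂
  obtain ⟨x, -, hx, -, -⟩ := aux_three H₁ h₁ g₁
  have hxB : g₂⁻¹ * x ∈ H₂ := by
    rw [← memB]; exact hcon x (by rw [memA]; exact hx)
  have hle : H₁ ≤ H₂ := by
    intro h hh
    have hxh : x * h ∉ g₁ • (H₁ : Set G) := by
      rw [memA]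
      intro hmem
      rw [← mul_assoc] at hmem
      exact hx (by simpa using (mul_mem hmem (inv_mem hh) : g₁⁻¹ * x * h * h⁻¹ ∈ H₁))
    have := (memB _).mp (hcon _ hxh)
    have : (g₂⁻¹ * x)⁻¹ * (g₂⁻¹ * (x * h)) ∈ H₂ := mul_mem (inv_mem hxB) this
    simpa [mul_assoc] using this
  -- Step 2: two distinct H₂-cosets outside g₂H₂
  obtain ⟨u, v, hu, hv, huv⟩ := aux_three H₂ h₂ g₂
  have huA : g₁⁻¹ * u ∈ H₁ := by
    rw [← memA]
    by_contra h'
    exact hu ((memB u).mp (hcon u h'))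
  have hvA : g₁⁻¹ * v ∈ H₁ := by
    rw [← memA]
    by_contra h'
    exact hv ((memB v).mp (hcon v h'))
  have : u⁻¹ * v ∈ H₁ := by
    have := mul_mem (inv_mem huA) hvA
    simpa [mul_assoc] using this
  exact huv (hle this)
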